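/- Let 0 ≤ γ < 1 and let w be a weight on ℝ^{n+1}. The following are equivalent: (i) there exist 0 < α, β < 1 such that |R^+(γ) ∩ {w < β·w_{R^−(γ)}}| < α·|R^+(γ)| for every parabolic rectangle R; (ii) there exist 0 < α, β < 1 such that w satisfies the qualitative measure condition with parameters (γ, α, β). -/

import Mathlib

open MeasureTheory ENNReal Set

noncomputable section

/-- The closed spatial cube `Q(x,L)` with center `x` and side length `L`. -/
def spCube (n : ℕ) (x : Fin n → ℝ) (L : ℝ) : Set (Fin n → ℝ) :=
  {y | ∀ i, |y i - x i| ≤ L}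

/-- The parabolic rectangle `R(x,t,L) = Q(x,L) × (t - L^p, t + L^p)`. -/
def pRect (n : ℕ) (p : ℝ) (x : Fin n → ℝ) (t L : ℝ) : Set ((Fin n → ℝ) × ℝ) :=
  (spCube n x L) ×ˢ (Set.Ioo (t - L ^ p) (t + L ^ p))

/-- The upper part `R^+(γ) = Q(x,L) × (t + γL^p, t + L^p)` of the parabolic rectangle. -/
def pRectPlus (n : ℕ) (p : ℝ) (x : Fin n → ℝ) (t L γ : ℝ) : Set ((Fin n → ℝ) × ℝ) :=
  (spCube n x L) ×ˢ (Set.Ioo (t + γ * L ^ p) (t + L ^ p))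

/-- The lower part `R^-(γ) = Q(x,L) × (t - L^p, t - γL^p)` of the parabolic rectangle. -/
def pRectMinus (n : ℕ) (p : ℝ) (x : Fin n → ℝ) (t L γ : ℝ) : Set ((Fin n → ℝ) × ℝ) :=
  (spCube n x L) ×ˢ (Set.Ioo (t - L ^ p) (t - γ * L ^ p))

/-- The time translate `A + (0,s) = {(y, r + s) : (y,r) ∈ A}`. -/
def tAdd (n : ℕ) (A : Set ((Fin n → ℝ) × ℝ)) (s : ℝ) : Set ((Fin n → ℝ) × ℝ) :=
  {z | (z.1, z.2 - s) ∈ A}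

/-- A weight: a nonnegative (`ℝ≥0∞`-valued) a.e. measurable, locally integrable function. -/
def IsWeight (n : ℕ) (w : (Fin n → ℝ) × ℝ → ℝ≥0∞) : Prop :=
  AEMeasurable w (volume : Measure ((Fin n → ℝ) × ℝ)) ∧
    ∀ K : Set ((Fin n → ℝ) × ℝ), IsCompact K → ∫⁻ z in K, w z ∂volume < ⊤

/-- `C` is an admissible constant in the parabolic Muckenhoupt `A_q^+(γ)` condition (`1 < q`). -/
def IsAqPlusConst (n : ℕ) (p q γ : ℝ) (w : (Fin n → ℝ) × ℝ → ℝ≥0∞) (C : ℝ≥0∞) : Prop :=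
  ∀ (x : Fin n → ℝ) (t L : ℝ), 0 < L →
    (⨍⁻ z in pRectMinus n p x t L γ, w z ∂volume) *
      (⨍⁻ z in pRectPlus n p x t L γ, w z ^ (1 / (1 - q)) ∂volume) ^ (q - 1) ≤ C

/-- `C` is an admissible constant in the parabolic Muckenhoupt `A_q^-(γ)` condition (`1 < q`),
i.e. the condition with the time direction reversed. -/
def IsAqMinusConst (n : ℕ) (p q γ : ℝ) (w : (Fin n → ℝ) × ℝ → ℝ≥0∞) (C : ℝ≥0∞) : Prop :=
  ∀ (x : Fin n → ℝ) (t L : ℝ), 0 < L →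
    (⨍⁻ z in pRectPlus n p x t L γ, w z ∂volume) *
      (⨍⁻ z in pRectMinus n p x t L γ, w z ^ (1 / (1 - q)) ∂volume) ^ (q - 1) ≤ C

/-- The parabolic Muckenhoupt class `A_q^+(γ)` for `1 < q`. -/
def MemAqPlus (n : ℕ) (p q γ : ℝ) (w : (Fin n → ℝ) × ℝ → ℝ≥0∞) : Prop :=
  ∃ C : ℝ≥0∞, C ≠ ⊤ ∧ IsAqPlusConst n p q γ w C

/-- The parabolic Muckenhoupt class `A_q^-(γ)` for `1 < q`. -/
def MemAqMinus (n : ℕ) (p q γ : ℝ) (w : (Fin n → ℝ) × ℝ → ℝ≥0∞) : Prop :=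
  ∃ C : ℝ≥0∞, C ≠ ⊤ ∧ IsAqMinusConst n p q γ w C

/-- `C` is an admissible constant in the parabolic Muckenhoupt `A_1^+(γ)` condition. -/
def IsA1PlusConst (n : ℕ) (p γ : ℝ) (w : (Fin n → ℝ) × ℝ → ℝ≥0∞) (C : ℝ≥0∞) : Prop :=
  ∀ (x : Fin n → ℝ) (t L : ℝ), 0 < L →
    (⨍⁻ z in pRectMinus n p x t L γ, w z ∂volume) ≤
      C * essInf w (volume.restrict (pRectPlus n p x t L γ))

/-- `C` is an admissible constant in the parabolic Muckenhoupt `A_1^-(γ)` condition. -/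
def IsA1MinusConst (n : ℕ) (p γ : ℝ) (w : (Fin n → ℝ) × ℝ → ℝ≥0∞) (C : ℝ≥0∞) : Prop :=
  ∀ (x : Fin n → ℝ) (t L : ℝ), 0 < L →
    (⨍⁻ z in pRectPlus n p x t L γ, w z ∂volume) ≤
      C * essInf w (volume.restrict (pRectMinus n p x t L γ))

/-- The parabolic Muckenhoupt class `A_1^+(γ)`. -/
def MemA1Plus (n : ℕ) (p γ : ℝ) (w : (Fin n → ℝ) × ℝ → ℝ≥0∞) : Prop :=
  ∃ C : ℝ≥0∞, 0 < C ∧ C ≠ ⊤ ∧ IsA1PlusConst n p γ w C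

/-- The parabolic Muckenhoupt class `A_1^-(γ)`. -/
def MemA1Minus (n : ℕ) (p γ : ℝ) (w : (Fin n → ℝ) × ℝ → ℝ≥0∞) : Prop :=
  ∃ C : ℝ≥0∞, 0 < C ∧ C ≠ ⊤ ∧ IsA1MinusConst n p γ w C

/-- Unified admissible `A_q^+(γ)` constant for `1 ≤ q < ∞`. -/
def IsAPlusConst (n : ℕ) (p q γ : ℝ) (w : (Fin n → ℝ) × ℝ → ℝ≥0∞) (C : ℝ≥0∞) : Prop :=
  if q = 1 then IsA1PlusConst n p γ w C else IsAqPlusConst n p q γ w C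

/-- Unified parabolic Muckenhoupt class `A_q^+(γ)` for `1 ≤ q < ∞`. -/
def MemAPlus (n : ℕ) (p q γ : ℝ) (w : (Fin n → ℝ) × ℝ → ℝ≥0∞) : Prop :=
  ∃ C : ℝ≥0∞, C ≠ ⊤ ∧ IsAPlusConst n p q γ w C

/-- The uncentered forward-in-time parabolic maximal function `M^{γ+}g`. -/
def MaxPlus (n : ℕ) (p γ : ℝ) (g : (Fin n → ℝ) × ℝ → ℝ≥0∞) (z : (Fin n → ℝ) × ℝ) : ℝ≥0∞ :=
  ⨆ (x : Fin n → ℝ) (t : ℝ) (L : ℝ) (_ : 0 < L) (_ : z ∈ pRectMinus n p x t L γ),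
    ⨍⁻ y in pRectPlus n p x t L γ, g y ∂volume

/-- The uncentered backward-in-time parabolic maximal function `M^{γ-}g`. -/
def MaxMinus (n : ℕ) (p γ : ℝ) (g : (Fin n → ℝ) × ℝ → ℝ≥0∞) (z : (Fin n → ℝ) × ℝ) : ℝ≥0∞ :=
  ⨆ (x : Fin n → ℝ) (t : ℝ) (L : ℝ) (_ : 0 < L) (_ : z ∈ pRectPlus n p x t L γ),
    ⨍⁻ y in pRectMinus n p x t L γ, g y ∂volume

/-- The qualitative measure condition with parameters `(γ, α, β)`:
for every parabolic rectangle `R` and every measurable `E ⊆ R^+(γ)` with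
`w(E) < β·w(R^-(γ))` one has `|E| < α·|R^+(γ)|`. -/
def QualMeasCond (n : ℕ) (p γ α β : ℝ) (w : (Fin n → ℝ) × ℝ → ℝ≥0∞) : Prop :=
  ∀ (x : Fin n → ℝ) (t L : ℝ), 0 < L →
    ∀ E : Set ((Fin n → ℝ) × ℝ), E ⊆ pRectPlus n p x t L γ → MeasurableSet E →
      (∫⁻ z in E, w z ∂volume) <
          ENNReal.ofReal β * ∫⁻ z in pRectMinus n p x t L γ, w z ∂volume →
        volume E < ENNReal.ofReal α * volume (pRectPlus n p x t L γ)

end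
section Helpers

variable {n : ℕ} {p : ℝ} {x : Fin n → ℝ} {t L γ : ℝ}

lemma spCube_eq_pi (n : ℕ) (x : Fin n → ℝ) (L : ℝ) :
    spCube n x L = Set.pi Set.univ (fun i => Set.Icc (x i - L) (x i + L)) := by
  ext y
  simp only [spCube, Set.mem_setOf_eq, Set.mem_pi, Set.mem_univ, Set.mem_Icc, true_implies]
  refine forall_congr' fun i => ?_
  rw [abs_le]
  constructor <;> intro h <;> constructor <;> linarith [h.1, h.2]

lemma measurableSet_spCube (n : ℕ) (x : Fin n → ℝ) (L : ℝ) :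
    MeasurableSet (spCube n x L) := by
  rw [spCube_eq_pi]; exact MeasurableSet.univ_pi fun i => measurableSet_Icc

lemma isCompact_spCube (n : ℕ) (x : Fin n → ℝ) (L : ℝ) :
    IsCompact (spCube n x L) := by
  rw [spCube_eq_pi]; exact isCompact_univ_pi fun i => isCompact_Icc

lemma volume_spCube (n : ℕ) (x : Fin n → ℝ) (L : ℝ) :
    volume (spCube n x L) = ENNReal.ofReal (2 * L) ^ n := by
  rw [spCube_eq_pi, volume_pi_pi]
  have h : ∀ i : Fin n, volume (Set.Icc (x i - L) (x i + L)) = ENNReal.ofReal (2 * L) := by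
    intro i; rw [Real.volume_Icc]; congr 1; ring
  simp [h]

lemma measurableSet_pRectPlus (n : ℕ) (p : ℝ) (x : Fin n → ℝ) (t L γ : ℝ) :
    MeasurableSet (pRectPlus n p x t L γ) :=
  (measurableSet_spCube n x L).prod measurableSet_Ioo

lemma volume_pRectPlus (n : ℕ) (p : ℝ) (x : Fin n → ℝ) (t L γ : ℝ) :
    volume (pRectPlus n p x t L γ)
      = ENNReal.ofReal (2 * L) ^ n * ENNReal.ofReal ((1 - γ) * L ^ p) := by
  rw [pRectPlus, Measure.volume_eq_prod, Measure.prod_prod, volume_spCube, Real.volume_Ioo]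
  congr 2; ring

lemma volume_pRectMinus (n : ℕ) (p : ℝ) (x : Fin n → ℝ) (t L γ : ℝ) :
    volume (pRectMinus n p x t L γ)
      = ENNReal.ofReal (2 * L) ^ n * ENNReal.ofReal ((1 - γ) * L ^ p) := by
  rw [pRectMinus, Measure.volume_eq_prod, Measure.prod_prod, volume_spCube, Real.volume_Ioo]
  congr 2; ring

lemma volume_pRectPlus_ne_zero (n : ℕ) (p : ℝ) (x : Fin n → ℝ) (t L γ : ℝ)
    (hL : 0 < L) (hγ1 : γ < 1) : volume (pRectPlus n p x t L γ) ≠ 0 := by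
  rw [volume_pRectPlus]
  have h1 : (0:ℝ) < 2 * L := by linarith
  have h2 : (0:ℝ) < (1 - γ) * L ^ p :=
    mul_pos (by linarith) (Real.rpow_pos_of_pos hL p)
  exact mul_ne_zero (pow_ne_zero _ (by simp [ENNReal.ofReal_eq_zero]; linarith))
    (by simp [ENNReal.ofReal_eq_zero]; linarith)

lemma volume_pRectPlus_ne_top (n : ℕ) (p : ℝ) (x : Fin n → ℝ) (t L γ : ℝ) :
    volume (pRectPlus n p x t L γ) ≠ ⊤ := by
  rw [volume_pRectPlus]
  exact ENNReal.mul_ne_top (ENNReal.pow_ne_top ENNReal.ofReal_ne_top) ENNReal.ofReal_ne_top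

lemma lint_pRectMinus_ne_top {w : (Fin n → ℝ) × ℝ → ℝ≥0∞} (hw : IsWeight n w)
    (n' : ℕ) (p : ℝ) (x : Fin n → ℝ) (t L γ : ℝ) :
    (∫⁻ z in pRectMinus n p x t L γ, w z ∂volume) ≠ ⊤ := by
  have hsub : pRectMinus n p x t L γ ⊆
      (spCube n x L) ×ˢ (Set.Icc (t - L ^ p) (t - γ * L ^ p)) :=
    Set.prod_mono (le_refl _) Set.Ioo_subset_Icc_self
  exact (lt_of_le_of_lt (lintegral_mono_set hsub)
    (hw.2 _ ((isCompact_spCube n x L).prod isCompact_Icc))).ne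

end Helpers

/-- Let `0 ≤ γ < 1` and `w` a weight. The sublevel measure condition
(existence of `0 < α, β < 1` with `|R^+(γ) ∩ {w < β·w_{R^-(γ)}}| < α·|R^+(γ)|` for
every parabolic rectangle `R`) is equivalent to the qualitative measure condition
(for some parameters `0 < α, β < 1`). -/
theorem statement9 (n : ℕ) (hn : 1 ≤ n) (p : ℝ) (hp : 1 < p)
    (γ : ℝ) (hγ0 : 0 ≤ γ) (hγ1 : γ < 1)
    (w : (Fin n → ℝ) × ℝ → ℝ≥0∞) (hw : IsWeight n w) :
    (∃ α β : ℝ, 0 < α ∧ α < 1 ∧ 0 < β ∧ β < 1 ∧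
      ∀ (x : Fin n → ℝ) (t L : ℝ), 0 < L →
        volume (pRectPlus n p x t L γ ∩
            {z | w z < ENNReal.ofReal β * ⨍⁻ y in pRectMinus n p x t L γ, w y ∂volume}) <
          ENNReal.ofReal α * volume (pRectPlus n p x t L γ)) ↔
    (∃ α β : ℝ, 0 < α ∧ α < 1 ∧ 0 < β ∧ β < 1 ∧ QualMeasCond n p γ α β w) := by
  constructor
  · -- sublevel condition ⇒ qualitative measure condition
    rintro ⟨α, β, hα0, hα1, hβ0, hβ1, h⟩
    refine ⟨(1 + α) / 2, β * (1 - α) / 4, by linarith, by linarith, ?_, ?_, ?_⟩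
    · have := mul_pos hβ0 (by linarith : (0:ℝ) < 1 - α); linarith
    · nlinarith
    · intro x t L hL E hE hEm hEw
      set V := volume (pRectPlus n p x t L γ) with hVdef
      set m := ∫⁻ z in pRectMinus n p x t L γ, w z ∂volume with hmdef
      have hV0 : V ≠ 0 := volume_pRectPlus_ne_zero n p x t L γ hL hγ1
      have hVt : V ≠ ⊤ := volume_pRectPlus_ne_top n p x t L γ
      have hmt : m ≠ ⊤ := lint_pRectMinus_ne_top hw 0 p x t L γ
      by_cases hm0 : m = 0
      · rw [hm0, mul_zero] at hEw
        exact absurd hEw (by simp)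
      · set A := ⨍⁻ y in pRectMinus n p x t L γ, w y ∂volume with hAdef
        have hA : A = m / V := by
          rw [hAdef, setLAverage_eq, volume_pRectMinus, ← volume_pRectPlus (γ := γ)]
        have hAV : A * V = m := by rw [hA, ENNReal.div_mul_cancel hV0 hVt]
        have hA0 : A ≠ 0 := by
          rw [hA]
          simp only [ne_eq, ENNReal.div_eq_zero_iff, not_or]
          exact ⟨hm0, hVt⟩
        have hAt : A ≠ ⊤ := by rw [hA]; exact (ENNReal.div_lt_top hmt hV0).ne
        set c := ENNReal.ofReal β * A with hcdef
        have hc0 : c ≠ 0 :=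
          mul_ne_zero (by simp only [ne_eq, ENNReal.ofReal_eq_zero, not_le]; linarith) hA0
        have hct : c ≠ ⊤ := ENNReal.mul_ne_top ENNReal.ofReal_ne_top hAt
        have hS := h x t L hL
        have hsplit : volume E ≤
            volume (E ∩ {z | w z < c}) + volume (E ∩ {z | c ≤ w z}) := by
          refine le_trans (measure_mono ?_) (measure_union_le _ _)
          intro z hz
          by_cases h' : w z < c
          · exact Or.inl ⟨hz, h'⟩
          · exact Or.inr ⟨hz, not_lt.1 h'⟩
        have h1 : volume (E ∩ {z | w z < c}) < ENNReal.ofReal α * V :=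
          lt_of_le_of_lt (measure_mono (Set.inter_subset_inter_left _ hE)) hS
        have h2 : c * volume (E ∩ {z | c ≤ w z}) ≤ ∫⁻ z in E, w z ∂volume := by
          have hkey := mul_meas_ge_le_lintegral₀ (hw.1.restrict (s := E)) c
          rwa [Measure.restrict_apply' hEm, Set.inter_comm] at hkey
        have hkeyeq : ENNReal.ofReal (β * (1 - α) / 4) * m
            = c * (ENNReal.ofReal ((1 - α) / 4) * V) := by
          calc ENNReal.ofReal (β * (1 - α) / 4) * m
              = ENNReal.ofReal (β * ((1 - α) / 4)) * (A * V) := by rw [hAV]; congr 2; ring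
            _ = (ENNReal.ofReal β * ENNReal.ofReal ((1 - α) / 4)) * (A * V) := by
                rw [ENNReal.ofReal_mul hβ0.le]
            _ = c * (ENNReal.ofReal ((1 - α) / 4) * V) := by rw [hcdef]; ring
        have h3 : volume (E ∩ {z | c ≤ w z}) < ENNReal.ofReal ((1 - α) / 4) * V := by
          rw [← ENNReal.mul_lt_mul_iff_right hc0 hct]
          calc c * volume (E ∩ {z | c ≤ w z})
              ≤ ∫⁻ z in E, w z ∂volume := h2
            _ < ENNReal.ofReal (β * (1 - α) / 4) * m := hEw
            _ = c * (ENNReal.ofReal ((1 - α) / 4) * V) := hkeyeq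
        calc volume E
            ≤ volume (E ∩ {z | w z < c}) + volume (E ∩ {z | c ≤ w z}) := hsplit
          _ < ENNReal.ofReal α * V + ENNReal.ofReal ((1 - α) / 4) * V :=
              ENNReal.add_lt_add h1 h3
          _ = ENNReal.ofReal (α + (1 - α) / 4) * V := by
              rw [ENNReal.ofReal_add hα0.le (by linarith), add_mul]
          _ ≤ ENNReal.ofReal ((1 + α) / 2) * V :=
              mul_le_mul_left (ENNReal.ofReal_le_ofReal (by linarith)) V
  · -- qualitative measure condition ⇒ sublevel condition
    rintro ⟨α, β, hα0, hα1, hβ0, hβ1, hq⟩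
    refine ⟨α, β / 2, hα0, hα1, by linarith, by linarith, ?_⟩
    intro x t L hL
    set V := volume (pRectPlus n p x t L γ) with hVdef
    set m := ∫⁻ z in pRectMinus n p x t L γ, w z ∂volume with hmdef
    set A := ⨍⁻ y in pRectMinus n p x t L γ, w y ∂volume with hAdef
    have hV0 : V ≠ 0 := volume_pRectPlus_ne_zero n p x t L γ hL hγ1
    have hVt : V ≠ ⊤ := volume_pRectPlus_ne_top n p x t L γ
    have hmt : m ≠ ⊤ := lint_pRectMinus_ne_top hw 0 p x t L γ
    have hA : A = m / V := by
      rw [hAdef, setLAverage_eq, volume_pRectMinus, ← volume_pRectPlus (γ := γ)]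
    set c := ENNReal.ofReal (β / 2) * A with hcdef
    by_cases hm0 : m = 0
    · have hc : c = 0 := by rw [hcdef, hA, hm0]; simp
      have hempty : pRectPlus n p x t L γ ∩ {z | w z < c} = ∅ := by
        rw [hc]
        ext z
        simp
      rw [hempty, measure_empty]
      exact ENNReal.mul_pos (by simp only [ne_eq, ENNReal.ofReal_eq_zero, not_le]; linarith)
        hV0 |>.trans_le le_rfl
    · -- build a measurable superset of the sublevel set
      set w' := hw.1.mk w with hw'def
      have hw'm : Measurable w' := hw.1.measurable_mk
      have hae : w =ᵐ[volume] w' := hw.1.ae_eq_mk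
      set N := toMeasurable volume {z | w z ≠ w' z} with hNdef
      have hN0 : volume N = 0 := by
        rw [hNdef, measure_toMeasurable]
        exact ae_iff.mp hae
      have hNm : MeasurableSet N := measurableSet_toMeasurable _ _
      set E' := (pRectPlus n p x t L γ ∩ {z | w' z < c}) ∪ (pRectPlus n p x t L γ ∩ N)
        with hE'def
      have hsub : pRectPlus n p x t L γ ∩ {z | w z < c} ⊆ E' := by
        rintro z ⟨hz1, hz2⟩
        by_cases h' : w z = w' z
        · exact Or.inl ⟨hz1, by simpa only [Set.mem_setOf_eq, ← h'] using hz2⟩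
        · exact Or.inr ⟨hz1, subset_toMeasurable _ _ h'⟩
      have hE'm : MeasurableSet E' :=
        ((measurableSet_pRectPlus n p x t L γ).inter
          (measurableSet_lt hw'm measurable_const)).union
          ((measurableSet_pRectPlus n p x t L γ).inter hNm)
      have hE'sub : E' ⊆ pRectPlus n p x t L γ :=
        Set.union_subset Set.inter_subset_left Set.inter_subset_left
      have hwE' : (∫⁻ z in E', w z ∂volume) < ENNReal.ofReal β * m := by
        have hle : (∫⁻ z in E', w z ∂volume) ≤ ENNReal.ofReal (β / 2) * m := by
          calc (∫⁻ z in E', w z ∂volume)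
              ≤ (∫⁻ z in pRectPlus n p x t L γ ∩ {z | w' z < c}, w z ∂volume)
                + (∫⁻ z in pRectPlus n p x t L γ ∩ N, w z ∂volume) :=
                lintegral_union_le _ _ _
            _ = (∫⁻ z in pRectPlus n p x t L γ ∩ {z | w' z < c}, w' z ∂volume) + 0 := by
                rw [setLIntegral_measure_zero _ _ (measure_mono_null Set.inter_subset_right hN0)]
                congr 1
                exact lintegral_congr_ae (ae_restrict_of_ae hae)
            _ ≤ (∫⁻ _ in pRectPlus n p x t L γ ∩ {z | w' z < c}, c ∂volume) + 0 :=
                add_le_add_left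
                  (setLIntegral_mono'
                    ((measurableSet_pRectPlus n p x t L γ).inter
                      (measurableSet_lt hw'm measurable_const))
                    (fun z hz => hz.2.le)) 0
            _ = c * volume (pRectPlus n p x t L γ ∩ {z | w' z < c}) := by
                rw [setLIntegral_const, add_zero]
            _ ≤ c * V := mul_le_mul_right (measure_mono Set.inter_subset_left) c
            _ = ENNReal.ofReal (β / 2) * m := by
                rw [hcdef, hA, mul_assoc, ENNReal.div_mul_cancel hV0 hVt]
        refine lt_of_le_of_lt hle ?_
        exact (ENNReal.mul_lt_mul_iff_left hm0 hmt).2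
          (ENNReal.ofReal_lt_ofReal_iff hβ0 |>.2 (by linarith))
      have := hq x t L hL E' hE'sub hE'm hwE'
      exact lt_of_le_of_lt (measure_mono hsub) this
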